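/- arXiv:1812.01794 — 3 statements merged into one kernel-verified Lean document; each statement's English description precedes it below -/
import Mathlib

section
/- Let 2 ≤ ℓ ≤ n be integers and let p ∈ (0,1). Let U_1,…,U_{n−1} be i.i.d. uniform random variables on [0,p], let U_{(ℓ−1)} denote the (ℓ−1)-th largest among them, and let W′ be a random variable that, conditioned on U_1,…,U_{n−1}, is uniformly distributed on [U_{(ℓ−1)}, 1]. Then Pr[W′ > p] = Pr[W_{ℓ−1,n−1} > p and X_{(1),n−1} < p] / p^{n−1}. (This expresses that the law of W_{ℓ,n} conditioned on X_{(1),n} = p equals the law of W_{ℓ−1,n−1} conditioned on X_{(1),n−1} < p.) -/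
open MeasureTheory Set

/-- The uniform distribution on `[0,1]`. -/
noncomputable def unif : Measure ℝ := volume.restrict (Set.Icc 0 1)

instance : IsProbabilityMeasure unif := by
  constructor
  simp [unif, Real.volume_Icc]

/-- The uniform distribution on `[0,p]` (for `p > 0`), as the pushforward of the uniform
distribution on `[0,1]` under multiplication by `p`. -/
noncomputable def unifTo (p : ℝ) : Measure ℝ := Measure.map (fun u => p * u) unif

instance (p : ℝ) : IsProbabilityMeasure (unifTo p) :=
  Measure.isProbabilityMeasure_map (by fun_prop)

/-- The `k`-th largest entry (1-indexed) of a tuple `x : Fin n → ℝ`. -/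
noncomputable def kthLargest {n : ℕ} (x : Fin n → ℝ) (k : ℕ) : ℝ :=
  if h : n - k < n then x (Tuple.sort x ⟨n - k, h⟩) else 0

/-- Given the draws `x` and an independent uniform `u ∈ [0,1]`, this is the random
variable `W_{ℓ,·}` which, conditioned on `x`, is uniform on `[X_{(ℓ)}, 1]`. -/
noncomputable def Wvar {n : ℕ} (ℓ : ℕ) (x : Fin n → ℝ) (u : ℝ) : ℝ :=
  kthLargest x ℓ + u * (1 - kthLargest x ℓ)

/-! Conditioning the draws on `[0,1]` on the event `X_{(1)} < p`, i.e. on all of them lying in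
`[0,p)`, turns their joint law into `p^m` times the joint law of `m` uniform draws on `[0,p]`;
the event `W > p` only depends on the draws, so both sides of the identity are the same
number. -/

open scoped ENNReal

namespace MeasureTheory.Measure

theorem pi_const_smul {ι : Type*} [Fintype ι] {α : Type*} [MeasurableSpace α] (μ : Measure α)
    [IsFiniteMeasure μ] {c : ℝ≥0∞} (hc : c ≠ ∞) :
    Measure.pi (fun _ : ι => c • μ) = c ^ Fintype.card ι • Measure.pi (fun _ : ι => μ) := by
  have : IsFiniteMeasure (c • μ) := μ.smul_finite hc
  refine pi_eq fun s _ => ?_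
  simp [Finset.prod_mul_distrib]

end MeasureTheory.Measure

theorem unifTo_eq_smul_restrict {p : ℝ} (hp : 0 < p) :
    unifTo p = ENNReal.ofReal p⁻¹ • volume.restrict (Icc 0 p) := by
  have hpre : (p * ·) ⁻¹' Icc 0 p = Icc (0 : ℝ) 1 := by
    ext u
    simp only [mem_preimage, mem_Icc]
    constructor
    · rintro ⟨h0, h1⟩
      exact ⟨nonneg_of_mul_nonneg_right (by linarith) hp, by nlinarith⟩
    · rintro ⟨h0, h1⟩
      exact ⟨by positivity, by nlinarith⟩
  rw [unifTo, unif, ← hpre, ← Measure.restrict_map (by fun_prop) measurableSet_Icc,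
    Real.map_volume_mul_left hp.ne', abs_of_pos (inv_pos.2 hp), Measure.restrict_smul]

theorem unif_restrict_Iio {p : ℝ} (hp0 : 0 < p) (hp1 : p ≤ 1) :
    unif.restrict (Iio p) = ENNReal.ofReal p • unifTo p := by
  rw [unifTo_eq_smul_restrict hp0, smul_smul, ← ENNReal.ofReal_mul hp0.le,
    mul_inv_cancel₀ hp0.ne', ENNReal.ofReal_one, one_smul, unif,
    Measure.restrict_restrict measurableSet_Iio, inter_comm]
  have hIco : Icc 0 1 ∩ Iio p = Ico 0 p := by
    ext u
    simp only [mem_inter_iff, mem_Icc, mem_Iio, mem_Ico]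
    grind
  rw [hIco]
  exact Measure.restrict_congr_set Ico_ae_eq_Icc

-- For `m = 0`, `kthLargest x 1` is the junk value `0`, hence the hypothesis `0 < p`.
theorem kthLargest_one_lt_iff {m : ℕ} (x : Fin m → ℝ) {p : ℝ} (hp : 0 < p) :
    kthLargest x 1 < p ↔ ∀ i, x i < p := by
  rcases Nat.eq_zero_or_pos m with rfl | hm
  · simp [kthLargest, hp]
  rw [kthLargest, dif_pos (by omega)]
  refine ⟨fun hlt i => lt_of_le_of_lt ?_ hlt, fun h => h _⟩
  have hi : (Tuple.sort x).symm i ≤ ⟨m - 1, by omega⟩ :=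
    Fin.le_def.2 (Nat.le_sub_one_of_lt ((Tuple.sort x).symm i).isLt)
  simpa using Tuple.monotone_sort x hi

theorem pi_unif_restrict_pi_Iio {ι : Type*} [Fintype ι] {p : ℝ} (hp0 : 0 < p) (hp1 : p ≤ 1) :
    (Measure.pi fun _ : ι => unif).restrict (univ.pi fun _ => Iio p) =
      ENNReal.ofReal p ^ Fintype.card ι • Measure.pi fun _ : ι => unifTo p := by
  rw [Measure.restrict_pi_pi, ← Measure.pi_const_smul _ ENNReal.ofReal_ne_top]
  simp_rw [unif_restrict_Iio hp0 hp1]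

theorem stmt4_general (n ℓ : ℕ) :
    ∀ p ∈ Set.Ioo (0 : ℝ) 1,
      (((Measure.pi fun _ : Fin (n - 1) => unifTo p).prod unif)
        {ω : (Fin (n - 1) → ℝ) × ℝ | p < Wvar (ℓ - 1) ω.1 ω.2}).toReal =
      (((Measure.pi fun _ : Fin (n - 1) => unif).prod unif)
        {ω : (Fin (n - 1) → ℝ) × ℝ |
          p < Wvar (ℓ - 1) ω.1 ω.2 ∧ kthLargest ω.1 1 < p}).toReal / p ^ (n - 1) := by
  rintro p ⟨hp0, hp1⟩
  set A := {ω : (Fin (n - 1) → ℝ) × ℝ | p < Wvar (ℓ - 1) ω.1 ω.2}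
  have hS : MeasurableSet (univ.pi fun _ : Fin (n - 1) => Iio p) :=
    MeasurableSet.univ_pi fun _ => measurableSet_Iio
  have hevent : {ω : (Fin (n - 1) → ℝ) × ℝ | p < Wvar (ℓ - 1) ω.1 ω.2 ∧ kthLargest ω.1 1 < p} =
      A ∩ (univ.pi fun _ => Iio p) ×ˢ univ := by
    ext ω
    simp [A, kthLargest_one_lt_iff _ hp0]
  have hmeas : ((Measure.pi fun _ : Fin (n - 1) => unif).prod unif)
      (A ∩ (univ.pi fun _ => Iio p) ×ˢ univ) =
      ENNReal.ofReal p ^ (n - 1) * ((Measure.pi fun _ : Fin (n - 1) => unifTo p).prod unif) A := by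
    rw [← Measure.restrict_apply' (hS.prod MeasurableSet.univ),
      ← Measure.restrict_prod_eq_prod_univ, pi_unif_restrict_pi_Iio hp0 hp1.le,
      Measure.prod_smul_left, Measure.smul_apply, Fintype.card_fin, smul_eq_mul]
  rw [hevent, hmeas, ENNReal.toReal_mul, ENNReal.toReal_pow, ENNReal.toReal_ofReal hp0.le]
  field_simp

/-- Let `2 ≤ ℓ ≤ n` and `p ∈ (0,1)`.  Let `U_1,…,U_{n-1}` be i.i.d. uniform
on `[0,p]`, let `U_{(ℓ-1)}` be the `(ℓ-1)`-th largest among them, and `W′` uniform on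
`[U_{(ℓ-1)},1]` conditioned on the `U`'s.  Then
`Pr[W′ > p] = Pr[W_{ℓ-1,n-1} > p ∧ X_{(1),n-1} < p] / p^{n-1}`. -/
theorem stmt4 (n ℓ : ℕ) (hℓ : 2 ≤ ℓ) (hℓn : ℓ ≤ n) :
    ∀ p ∈ Set.Ioo (0 : ℝ) 1,
      (((Measure.pi fun _ : Fin (n - 1) => unifTo p).prod unif)
        {ω : (Fin (n - 1) → ℝ) × ℝ | p < Wvar (ℓ - 1) ω.1 ω.2}).toReal =
      (((Measure.pi fun _ : Fin (n - 1) => unif).prod unif)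
        {ω : (Fin (n - 1) → ℝ) × ℝ |
          p < Wvar (ℓ - 1) ω.1 ω.2 ∧ kthLargest ω.1 1 < p}).toReal / p ^ (n - 1) :=
  stmt4_general n ℓ
end

section
/- Let n ≥ 1 and m ≥ 2 be integers and let c be a real number with c ≥ n·(1 + ln(1 + m/n)). Then for all p ∈ (0,1), (1 − p^c)·p^n ≥ Pr[Y*_{n,m−1} > p and X_{(1),n} < p]; equivalently, the conditional probability that the maximum of c i.i.d. uniform draws exceeds p, given X_{(1),n} < p, is at least Pr[Y*_{n,m−1} > p | X_{(1),n} < p]. -/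
open MeasureTheory Set

open Classical in
/-- Using an auxiliary uniform `v ∈ [0,1]` as randomness, pick (uniformly at random when `v`
is uniform) the value `y j` for an index `j` in the set `{j | t < y j}`.  Returns `0` if
that set is empty. -/
noncomputable def pickedY {k : ℕ} (y : Fin k → ℝ) (t v : ℝ) : ℝ :=
  let S : Finset (Fin k) := Finset.univ.filter (fun j => t < y j)
  ((S.sort (· ≤ ·)).map y).getD (min (Int.toNat ⌊v * S.card⌋) (S.card - 1)) 0

open Classical in
/-- The random variable `Y*_{n,m-1}`: it equals `0` if `Y_j < X_{(1),n}` for all `j`, and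
otherwise equals `Y_J` where `J` is uniform on `{j | Y_j > X_{(1),n}}` (chosen using the
auxiliary independent uniform `v`). -/
noncomputable def Ystar {n k : ℕ} (x : Fin n → ℝ) (y : Fin k → ℝ) (v : ℝ) : ℝ :=
  if ∀ j, y j < kthLargest x 1 then 0 else pickedY y (kthLargest x 1) v

/-- The sample space: `n` i.i.d. uniforms `X`, `m-1` i.i.d. uniforms `Y`, and the auxiliary
uniform used to choose `J`, all independent. -/
noncomputable def P₈ (n m : ℕ) : Measure ((Fin n → ℝ) × (Fin (m - 1) → ℝ) × ℝ) :=
  (Measure.pi fun _ : Fin n => unif).prod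
    ((Measure.pi fun _ : Fin (m - 1) => unif).prod unif)


/-!
Condition on the maximum `t = X_{(1),n}`, whose law has density `n t^(n-1)` on `[0,1]`. For fixed
`t < p` and fixed `Y`'s, the uniformly chosen candidate exceeds `p` with probability at most `B/K`,
where `K` counts the `Y_j > t` and `B` the `Y_j > p`. Writing `B/K = ∫₀¹ B s^(K-1) ds` turns the
expectation over the independent `Y`'s into a product of one-dimensional integrals, and gives
`E[B/K] = (1-p)(1 + t + ⋯ + t^(m-2))`. Against the density of `t` this bounds the probability by
`(1-p) ∑_{i<m-1} a_i p^(n+i)` with `a_i = n/(n+i) ∈ [0,1]`. Bernoulli's inequality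
`a(1-p) ≤ 1 - p^a`, together with `p^i ≤ p^(a_0+⋯+a_(i-1))`, telescopes to
`(1-p) ∑ a_i p^i ≤ 1 - p^(∑ a_i)`, and comparing `∑ 1/(n+i)` with `∫ dx/x` gives `∑ a_i ≤ c`.
-/

open scoped ENNReal Finset

lemma unif_eq_restrict_Ioc : unif = volume.restrict (Ioc 0 1) :=
  (Measure.restrict_congr_set Ioc_ae_eq_Icc).symm

lemma unif_restrict_Iic (u : ℝ) :
    unif.restrict (Iic u) = volume.restrict (Ioc 0 (max 0 (min u 1))) := by
  rw [unif_eq_restrict_Ioc, Measure.restrict_restrict measurableSet_Iic]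
  congr 1
  ext x
  simp only [mem_inter_iff, mem_Iic, mem_Ioc, le_max_iff, le_min_iff]
  constructor
  · rintro ⟨hxu, hx0, hx1⟩; exact ⟨hx0, .inr ⟨hxu, hx1⟩⟩
  · rintro ⟨hx0, h | ⟨hxu, hx1⟩⟩
    · linarith
    · exact ⟨hxu, hx0, hx1⟩

lemma unif_Iic {a : ℝ} (h0 : 0 ≤ a) (h1 : a ≤ 1) : unif (Iic a) = ENNReal.ofReal a := by
  rw [← Measure.restrict_apply_univ, unif_restrict_Iic, Measure.restrict_apply_univ,
    Real.volume_Ioc, min_eq_left h1, max_eq_right h0, sub_zero]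

lemma unif_Ioi {a : ℝ} (h0 : 0 ≤ a) (h1 : a ≤ 1) : unif (Ioi a) = ENNReal.ofReal (1 - a) := by
  rw [← compl_Iic, prob_compl_eq_one_sub measurableSet_Iic, unif_Iic h0 h1,
    ENNReal.ofReal_sub _ h0, ENNReal.ofReal_one]

lemma ae_unif_mem_Icc : ∀ᵐ u ∂unif, u ∈ Icc (0 : ℝ) 1 := ae_restrict_mem measurableSet_Icc

lemma setLIntegral_unif_Iic_ofReal {f : ℝ → ℝ} {p : ℝ} (hp0 : 0 ≤ p) (hp1 : p ≤ 1)
    (hf : IntervalIntegrable f volume 0 p) (hf0 : ∀ x ∈ Ioc 0 p, 0 ≤ f x) :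
    ∫⁻ u in Iic p, ENNReal.ofReal (f u) ∂unif = ENNReal.ofReal (∫ u in 0..p, f u) := by
  rw [unif_restrict_Iic, min_eq_left hp1, max_eq_right hp0,
    intervalIntegral.integral_of_le hp0, ofReal_integral_eq_lintegral_ofReal
      ((intervalIntegrable_iff_integrableOn_Ioc_of_le hp0).mp hf)
      ((ae_restrict_mem measurableSet_Ioc).mono hf0)]

lemma lintegral_unif_ofReal {f : ℝ → ℝ} (hf : IntervalIntegrable f volume 0 1)
    (hf0 : ∀ x ∈ Ioc 0 1, 0 ≤ f x) :
    ∫⁻ u, ENNReal.ofReal (f u) ∂unif = ENNReal.ofReal (∫ u in 0..1, f u) := by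
  rw [← setLIntegral_unif_Iic_ofReal zero_le_one le_rfl hf hf0,
    Measure.restrict_eq_self_of_ae_mem (s := Iic 1) (ae_unif_mem_Icc.mono fun u hu => hu.2)]

lemma lintegral_unif_ofReal_pow (j : ℕ) :
    ∫⁻ s, ENNReal.ofReal s ^ j ∂unif = ENNReal.ofReal (1 / (j + 1)) := by
  rw [lintegral_congr_ae (ae_unif_mem_Icc.mono fun s hs => (ENNReal.ofReal_pow hs.1 j).symm),
    lintegral_unif_ofReal ((continuous_pow j).intervalIntegrable _ _)
      fun s hs => pow_nonneg hs.1.le j, integral_pow]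
  simp

lemma lintegral_pi_prod_eq_prod {ι Ω : Type*} [Fintype ι] [MeasurableSpace Ω] (μ : Measure Ω)
    [IsProbabilityMeasure μ] {g : ι → Ω → ℝ≥0∞} (hg : ∀ i, Measurable (g i)) :
    ∫⁻ y, ∏ i, g i (y i) ∂Measure.pi (fun _ => μ) = ∏ i, ∫⁻ u, g i u ∂μ := by
  rw [ProbabilityTheory.lintegral_prod_eq_prod_lintegral_of_indepFun _ _
    (ProbabilityTheory.iIndepFun_pi fun i => (hg i).aemeasurable)
    fun i => (hg i).comp (measurable_pi_apply i)]
  exact Finset.prod_congr rfl fun i _ => (measurePreserving_eval _ i).lintegral_comp (hg i)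

lemma kthLargest_one_eq_sup' {n : ℕ} (hn : 0 < n) (x : Fin n → ℝ) :
    kthLargest x 1 = Finset.univ.sup' (Finset.univ_nonempty_iff.mpr ⟨⟨0, hn⟩⟩) x := by
  have h : n - 1 < n := by omega
  rw [kthLargest, dif_pos h]
  refine le_antisymm (Finset.le_sup' x (Finset.mem_univ _)) (Finset.sup'_le _ _ fun i _ => ?_)
  have hle : (Tuple.sort x).symm i ≤ ⟨n - 1, h⟩ := Fin.le_def.mpr (by simp; omega)
  simpa using Tuple.monotone_sort x hle

lemma kthLargest_one_le_iff {n : ℕ} (hn : 0 < n) {x : Fin n → ℝ} {u : ℝ} :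
    kthLargest x 1 ≤ u ↔ ∀ i, x i ≤ u := by
  rw [kthLargest_one_eq_sup' hn, Finset.sup'_le_iff]
  simp

lemma le_kthLargest_one {n : ℕ} (x : Fin n → ℝ) (i : Fin n) : x i ≤ kthLargest x 1 := by
  rw [kthLargest_one_eq_sup' (Fin.pos i)]
  exact Finset.le_sup' x (Finset.mem_univ i)

lemma measurable_kthLargest_one {n : ℕ} (hn : 0 < n) :
    Measurable fun x : Fin n → ℝ => kthLargest x 1 := by
  have h : (fun x : Fin n → ℝ => kthLargest x 1)
      = Finset.univ.sup' (Finset.univ_nonempty_iff.mpr ⟨⟨0, hn⟩⟩) fun i (x : Fin n → ℝ) => x i := by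
    ext x
    rw [kthLargest_one_eq_sup' hn, Finset.sup'_apply]
  rw [h]
  exact Finset.measurable_sup' _ fun i _ => measurable_pi_apply i

lemma map_kthLargest_one_pi_unif {n : ℕ} (hn : 0 < n) :
    (Measure.pi fun _ : Fin n => unif).map (fun x => kthLargest x 1)
      = unif.withDensity fun u => ENNReal.ofReal (n * u ^ (n - 1)) := by
  have hmax := measurable_kthLargest_one hn
  have : IsProbabilityMeasure ((Measure.pi fun _ : Fin n => unif).map (kthLargest · 1)) :=
    Measure.isProbabilityMeasure_map hmax.aemeasurable
  refine Measure.ext_of_Iic _ _ fun u => ?_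
  set a := max 0 (min u 1)
  have ha : 0 ≤ a := le_max_left _ _
  have hpre : (fun x : Fin n → ℝ => kthLargest x 1) ⁻¹' Iic u = Set.pi univ fun _ => Iic u := by
    ext x
    simp [kthLargest_one_le_iff hn, Pi.le_def]
  rw [Measure.map_apply hmax measurableSet_Iic, hpre, Measure.pi_pi, Finset.prod_const,
    Finset.card_univ, Fintype.card_fin, withDensity_apply _ measurableSet_Iic,
    ← Measure.restrict_apply_univ, unif_restrict_Iic, Measure.restrict_apply_univ,
    Real.volume_Ioc, sub_zero, ← ofReal_integral_eq_lintegral_ofReal,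
    ← intervalIntegral.integral_of_le ha, intervalIntegral.integral_const_mul, integral_pow,
    ← ENNReal.ofReal_pow ha]
  · congr 1
    have : (n : ℝ) ≠ 0 := by positivity
    rw [Nat.cast_sub hn, Nat.cast_one, sub_add_cancel, Nat.sub_add_cancel hn, zero_pow hn.ne',
      sub_zero, mul_div_cancel₀ _ this]
  · exact Continuous.integrableOn_Ioc (by fun_prop)
  · exact (ae_restrict_mem measurableSet_Ioc).mono fun s hs => by
      have := hs.1.le; positivity

noncomputable def pickIndex (c : ℕ) (v : ℝ) : ℕ := min (Int.toNat ⌊v * c⌋) (c - 1)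

lemma pickedY_eq_getD {k : ℕ} (y : Fin k → ℝ) (t v : ℝ) :
    pickedY y t v = (({j | t < y j} : Finset (Fin k)).sort (· ≤ ·) |>.map y).getD
      (pickIndex #{j | t < y j} v) 0 := rfl

lemma Ystar_eq_pickedY {n k : ℕ} (x : Fin n → ℝ) (y : Fin k → ℝ) (v : ℝ) :
    Ystar x y v = pickedY y (kthLargest x 1) v := by
  rw [Ystar]
  split_ifs with h
  · have hemp : ({j | kthLargest x 1 < y j} : Finset (Fin k)) = ∅ :=
      Finset.filter_false_of_mem fun j _ => not_lt.mpr (h j).le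
    rw [pickedY_eq_getD, hemp]
    simp
  · rfl

lemma measurable_pickIndex (c : ℕ) : Measurable (pickIndex c) :=
  (measurable_of_countable fun z : ℤ => min z.toNat (c - 1)).comp
    (Int.measurable_floor.comp (measurable_id.mul_const _))

lemma mem_Icc_of_pickIndex_eq {c r : ℕ} {v : ℝ} (hc : 0 < c) (hv : v ∈ Icc (0 : ℝ) 1)
    (h : pickIndex c v = r) : v ∈ Icc (r / c : ℝ) ((r + 1) / c) := by
  have hcR : (0 : ℝ) < c := by exact_mod_cast hc
  have hfloor : ((Int.toNat ⌊v * c⌋ : ℕ) : ℝ) = ⌊v * c⌋ := by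
    exact_mod_cast Int.toNat_of_nonneg (Int.floor_nonneg.mpr (by nlinarith [hv.1]))
  have hle : (r : ℝ) ≤ ⌊v * c⌋ := by
    rw [← hfloor, ← h]; exact_mod_cast min_le_left _ _
  rw [mem_Icc, div_le_iff₀ hcR, le_div_iff₀ hcR]
  refine ⟨hle.trans (Int.floor_le _), ?_⟩
  rcases min_choice (Int.toNat ⌊v * c⌋) (c - 1) with hmin | hmin <;>
    rw [pickIndex, hmin] at h <;> subst h
  · rw [hfloor]; exact (Int.lt_floor_add_one _).le
  · rw [Nat.cast_sub hc, Nat.cast_one, sub_add_cancel]; nlinarith [hv.2]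

lemma unif_pickIndex_eq_le {c : ℕ} (hc : 0 < c) (r : ℕ) :
    unif {v | pickIndex c v = r} ≤ ENNReal.ofReal (1 / c) :=
  calc unif {v | pickIndex c v = r} ≤ unif (Icc (r / c : ℝ) ((r + 1) / c)) :=
        measure_mono_ae (ae_unif_mem_Icc.mono fun v hv h => mem_Icc_of_pickIndex_eq hc hv h)
    _ ≤ volume (Icc (r / c : ℝ) ((r + 1) / c)) := Measure.restrict_apply_le _ _
    _ = ENNReal.ofReal (1 / c) := by rw [Real.volume_Icc]; congr 1; ring

lemma unif_lt_pickedY_le {k : ℕ} (y : Fin k → ℝ) {t p : ℝ} (hp : 0 ≤ p) (htp : t ≤ p) :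
    unif {v | p < pickedY y t v} ≤ ENNReal.ofReal (#{j | p < y j} / #{j | t < y j}) := by
  set L := ({j | t < y j} : Finset (Fin k)).sort (· ≤ ·)
  have hsub : {v | p < pickedY y t v} ⊆
      ⋃ j ∈ ({j | p < y j} : Finset (Fin k)), {v | pickIndex #{j | t < y j} v = L.idxOf j} := by
    intro v hv
    rw [mem_ofPred_eq, pickedY_eq_getD] at hv
    set r := pickIndex #{j | t < y j} v
    -- off the list, `getD` returns its default `0 ≤ p`
    have hr : r < L.length := by
      by_contra hr
      rw [List.getD_eq_default _ _ (by rwa [List.length_map, ← not_lt])] at hv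
      linarith
    rw [List.getD_eq_getElem _ _ (by rwa [List.length_map]), List.getElem_map] at hv
    refine mem_biUnion (x := L[r]) (by simpa using hv) ?_
    exact ((Finset.sort_nodup _ _).idxOf_getElem r hr).symm
  calc unif {v | p < pickedY y t v}
      ≤ ∑ j ∈ ({j | p < y j} : Finset (Fin k)), unif {v | pickIndex #{j | t < y j} v = L.idxOf j} :=
        (measure_mono hsub).trans (measure_biUnion_finset_le _ _)
    _ ≤ ∑ j ∈ ({j | p < y j} : Finset (Fin k)), ENNReal.ofReal (1 / #{j | t < y j}) :=
        Finset.sum_le_sum fun j hj => unif_pickIndex_eq_le (Finset.card_pos.mpr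
          ⟨j, by simp only [Finset.mem_filter_univ] at hj ⊢; linarith⟩) _
    _ = ENNReal.ofReal (#{j | p < y j} / #{j | t < y j}) := by
        rw [Finset.sum_const, nsmul_eq_mul, ← ENNReal.ofReal_natCast,
          ← ENNReal.ofReal_mul (Nat.cast_nonneg _), mul_one_div]

lemma Measurable.finset_filter_lt {α : Type*} [MeasurableSpace α] {k : ℕ} {f : α → Fin k → ℝ}
    {g : α → ℝ} (hf : Measurable f) (hg : Measurable g) :
    Measurable fun a => ({j | g a < f a j} : Finset (Fin k)) := by
  refine measurable_finset_iff.mpr fun j => ?_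
  simp only [Finset.mem_filter_univ]
  exact measurableSet_setOfPred.mp (measurableSet_lt hg (measurable_pi_apply j |>.comp hf))

lemma measurable_getD_map {k : ℕ} (l : List (Fin k)) (r : ℕ) :
    Measurable fun y : Fin k → ℝ => (l.map y).getD r 0 := by
  simp_rw [List.getD_eq_getElem?_getD, List.getElem?_map]
  cases l[r]? with
  | none => exact measurable_const
  | some j => exact measurable_pi_apply j

lemma measurable_pickedY {k : ℕ} :
    Measurable fun w : (Fin k → ℝ) × ℝ × ℝ => pickedY w.1 w.2.1 w.2.2 := by
  have hsorted : Measurable fun q : Finset (Fin k) × (Fin k → ℝ) × ℝ =>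
      ((q.1.sort (· ≤ ·)).map q.2.1).getD (pickIndex #q.1 q.2.2) 0 := by
    refine measurable_from_prod_countable_right fun S => ?_
    have hentry : Measurable fun q : ℕ × (Fin k → ℝ) => ((S.sort (· ≤ ·)).map q.2).getD q.1 0 :=
      measurable_from_prod_countable_right fun r => measurable_getD_map _ r
    have hindex : Measurable fun w : (Fin k → ℝ) × ℝ => (pickIndex #S w.2, w.1) :=
      ((measurable_pickIndex _).comp measurable_snd).prodMk measurable_fst
    exact hentry.comp hindex
  simp_rw [pickedY_eq_getD]
  exact hsorted.comp ((measurable_fst.finset_filter_lt (measurable_fst.comp measurable_snd)).prodMk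
    (measurable_fst.prodMk (measurable_snd.comp measurable_snd)))

lemma measurable_Ystar {n k : ℕ} (hn : 0 < n) :
    Measurable fun ω : (Fin n → ℝ) × (Fin k → ℝ) × ℝ => Ystar ω.1 ω.2.1 ω.2.2 := by
  simp_rw [Ystar_eq_pickedY]
  exact measurable_pickedY.comp ((measurable_fst.comp measurable_snd).prodMk
    (((measurable_kthLargest_one hn).comp measurable_fst).prodMk
      (measurable_snd.comp measurable_snd)))

lemma ofReal_div_eq_lintegral_unif {b K : ℕ} (h : b ≤ K) :
    ENNReal.ofReal (b / K) = ∫⁻ s, b * ENNReal.ofReal s ^ (K - 1) ∂unif := by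
  rw [lintegral_const_mul _ (by fun_prop), lintegral_unif_ofReal_pow]
  rcases Nat.eq_zero_or_pos K with rfl | hK
  · simp [Nat.le_zero.mp h]
  · rw [Nat.cast_sub hK, Nat.cast_one, sub_add_cancel, ← ENNReal.ofReal_natCast,
      ← ENNReal.ofReal_mul (by positivity), mul_one_div]

lemma card_mul_pow_card_eq_sum_prod {k : ℕ} {t p : ℝ} (htp : t ≤ p) (σ : ℝ≥0∞)
    (y : Fin k → ℝ) :
    (#{j | p < y j} : ℝ≥0∞) * σ ^ (#{j | t < y j} - 1)
      = ∑ j, ∏ i, if i = j then (if p < y i then 1 else 0) else (if t < y i then σ else 1) := by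
  rw [Finset.card_filter, Nat.cast_sum, Finset.sum_mul]
  refine Finset.sum_congr rfl fun j _ => ?_
  rw [← Finset.mul_prod_erase _ _ (Finset.mem_univ j), if_pos rfl,
    Finset.prod_congr rfl fun i hi => if_neg (Finset.ne_of_mem_erase hi)]
  split_ifs with hj
  · have hcard : #{i | t < y i} - 1 = #{i ∈ Finset.univ.erase j | t < y i} := by
      rw [Finset.filter_erase, Finset.card_erase_of_mem (by simp; linarith)]
    rw [Finset.prod_ite, Finset.prod_const, Finset.prod_const, one_pow, mul_one, hcard]
    simp
  · simp

lemma lintegral_card_mul_pow_card {k : ℕ} {t p : ℝ} (ht0 : 0 ≤ t) (htp : t ≤ p) (hp1 : p ≤ 1)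
    (σ : ℝ≥0∞) :
    ∫⁻ y, (#{j | p < y j} : ℝ≥0∞) * σ ^ (#{j | t < y j} - 1) ∂(Measure.pi fun _ : Fin k => unif)
      = k * ENNReal.ofReal (1 - p) * (ENNReal.ofReal t + σ * ENNReal.ofReal (1 - t)) ^ (k - 1) := by
  have hIp : ∫⁻ u, (if p < u then 1 else 0) ∂unif = ENNReal.ofReal (1 - p) := by
    rw [← unif_Ioi (ht0.trans htp) hp1, ← lintegral_indicator_one measurableSet_Ioi]
    rfl
  have hIt : ∫⁻ u, (if t < u then σ else 1) ∂unif
      = ENNReal.ofReal t + σ * ENNReal.ofReal (1 - t) := by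
    have : (fun u : ℝ => if t < u then σ else 1) = (Ioi t).piecewise (fun _ => σ) (fun _ => 1) := by
      ext u; simp [Set.piecewise]
    rw [this, lintegral_piecewise measurableSet_Ioi, setLIntegral_const, setLIntegral_const,
      compl_Ioi, unif_Ioi ht0 (htp.trans hp1), unif_Iic ht0 (htp.trans hp1), one_mul, add_comm]
  set g : Fin k → Fin k → ℝ → ℝ≥0∞ := fun j i u =>
    if i = j then (if p < u then 1 else 0) else (if t < u then σ else 1)
  have hg : ∀ j i, Measurable (g j i) := fun j i => by
    simp only [g]
    split_ifs <;> exact .ite measurableSet_Ioi measurable_const measurable_const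
  have hpt : ∀ y : Fin k → ℝ, (#{j | p < y j} : ℝ≥0∞) * σ ^ (#{j | t < y j} - 1)
      = ∑ j, ∏ i, g j i (y i) := card_mul_pow_card_eq_sum_prod htp σ
  rw [lintegral_congr hpt, lintegral_finsetSum _ fun j _ => by fun_prop]
  have hint : ∀ j i, ∫⁻ u, g j i u ∂unif = if i = j then ENNReal.ofReal (1 - p)
      else ENNReal.ofReal t + σ * ENNReal.ofReal (1 - t) := fun j i => by
    by_cases h : i = j <;> simp only [g, h, if_true, if_false, hIp, hIt]
  simp_rw [lintegral_pi_prod_eq_prod unif (hg _), hint]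
  simp [Finset.prod_ite, Finset.filter_ne', Finset.filter_eq', mul_assoc]

lemma natCast_mul_integral_affine_pow {t : ℝ} (ht : t ≠ 1) (k : ℕ) :
    k * ∫ s in (0 : ℝ)..1, (t + s * (1 - t)) ^ (k - 1) = ∑ i ∈ Finset.range k, t ^ i := by
  rcases k with _ | k
  · simp
  have h1t : 1 - t ≠ 0 := sub_ne_zero.mpr ht.symm
  simp_rw [show ∀ s : ℝ, t + s * (1 - t) = (1 - t) * s + t from fun s => by ring]
  rw [Nat.add_sub_cancel, intervalIntegral.integral_comp_mul_add (fun x => x ^ k) h1t t,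
    integral_pow, geom_sum_eq ht, mul_zero, zero_add, mul_one, sub_add_cancel, one_pow, smul_eq_mul]
  push_cast
  field_simp
  ring

lemma natCast_mul_lintegral_unif_affine_pow {t : ℝ} (ht0 : 0 ≤ t) (ht1 : t < 1) (k : ℕ) :
    k * ∫⁻ s, (ENNReal.ofReal t + ENNReal.ofReal s * ENNReal.ofReal (1 - t)) ^ (k - 1) ∂unif
      = ENNReal.ofReal (∑ i ∈ Finset.range k, t ^ i) := by
  have hprod : ∀ s ∈ Icc (0 : ℝ) 1, 0 ≤ s * (1 - t) := fun s hs =>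
    mul_nonneg hs.1 (sub_nonneg.mpr ht1.le)
  have hpos : ∀ s ∈ Icc (0 : ℝ) 1, 0 ≤ t + s * (1 - t) := fun s hs => by
    linarith [hprod s hs]
  have hae : (fun s => (ENNReal.ofReal t + ENNReal.ofReal s * ENNReal.ofReal (1 - t)) ^ (k - 1))
      =ᵐ[unif] fun s => ENNReal.ofReal ((t + s * (1 - t)) ^ (k - 1)) :=
    ae_unif_mem_Icc.mono fun s hs => by
      dsimp only
      rw [← ENNReal.ofReal_mul hs.1, ← ENNReal.ofReal_add ht0 (hprod s hs),
        ENNReal.ofReal_pow (hpos s hs)]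
  rw [lintegral_congr_ae hae,
    lintegral_unif_ofReal (Continuous.intervalIntegrable (by fun_prop) _ _)
      fun s hs => pow_nonneg (hpos s (Ioc_subset_Icc_self hs)) _,
    ← ENNReal.ofReal_natCast, ← ENNReal.ofReal_mul (Nat.cast_nonneg _),
    natCast_mul_integral_affine_pow ht1.ne]

lemma lintegral_card_div_card {k : ℕ} {t p : ℝ} (ht0 : 0 ≤ t) (htp : t < p) (hp1 : p ≤ 1) :
    ∫⁻ y, ENNReal.ofReal (#{j | p < y j} / #{j | t < y j}) ∂(Measure.pi fun _ : Fin k => unif)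
      = ENNReal.ofReal ((1 - p) * ∑ i ∈ Finset.range k, t ^ i) := by
  have hcard : ∀ a : ℝ, Measurable fun y : Fin k → ℝ => #{j | a < y j} := fun a =>
    (measurable_of_countable Finset.card).comp (measurable_id.finset_filter_lt measurable_const)
  have hjoint : Measurable fun z : (Fin k → ℝ) × ℝ =>
      (#{j | p < z.1 j} : ℝ≥0∞) * ENNReal.ofReal z.2 ^ (#{j | t < z.1 j} - 1) :=
    ((measurable_of_countable _).comp ((hcard p).comp measurable_fst)).mul
      ((ENNReal.measurable_ofReal.comp measurable_snd).pow
        ((measurable_of_countable (· - 1)).comp ((hcard t).comp measurable_fst)))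
  calc ∫⁻ y, ENNReal.ofReal (#{j | p < y j} / #{j | t < y j}) ∂(Measure.pi fun _ : Fin k => unif)
      = ∫⁻ y, ∫⁻ s, (#{j | p < y j} : ℝ≥0∞) * ENNReal.ofReal s ^ (#{j | t < y j} - 1) ∂unif
          ∂(Measure.pi fun _ : Fin k => unif) := by
        refine lintegral_congr fun y => ofReal_div_eq_lintegral_unif (Finset.card_le_card ?_)
        exact Finset.monotone_filter_right _ fun j _ hj => htp.trans hj
    _ = ∫⁻ s, k * ENNReal.ofReal (1 - p) *
          (ENNReal.ofReal t + ENNReal.ofReal s * ENNReal.ofReal (1 - t)) ^ (k - 1) ∂unif := by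
        rw [lintegral_lintegral_swap hjoint.aemeasurable]
        exact lintegral_congr fun s => lintegral_card_mul_pow_card ht0 htp.le hp1 _
    _ = ENNReal.ofReal (1 - p) * (k * ∫⁻ s,
          (ENNReal.ofReal t + ENNReal.ofReal s * ENNReal.ofReal (1 - t)) ^ (k - 1) ∂unif) := by
        rw [lintegral_const_mul _ (by fun_prop)]
        ring
    _ = ENNReal.ofReal ((1 - p) * ∑ i ∈ Finset.range k, t ^ i) := by
        rw [natCast_mul_lintegral_unif_affine_pow ht0 (htp.trans_le hp1),
          ← ENNReal.ofReal_mul (sub_nonneg.mpr hp1)]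

lemma prod_lt_pickedY_le {k : ℕ} {t p : ℝ} (ht0 : 0 ≤ t) (htp : t < p) (hp1 : p ≤ 1) :
    ((Measure.pi fun _ : Fin k => unif).prod unif) {w | p < pickedY w.1 t w.2}
      ≤ ENNReal.ofReal ((1 - p) * ∑ i ∈ Finset.range k, t ^ i) := by
  have hmeas : MeasurableSet {w : (Fin k → ℝ) × ℝ | p < pickedY w.1 t w.2} :=
    measurableSet_lt measurable_const
      (measurable_pickedY.comp (measurable_fst.prodMk (measurable_const.prodMk measurable_snd)))
  rw [Measure.prod_apply hmeas, ← lintegral_card_div_card ht0 htp hp1]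
  exact lintegral_mono fun y => unif_lt_pickedY_le y (ht0.trans htp.le) htp.le

lemma prod_lt_Ystar_and_kthLargest_lt_le {n k : ℕ} {x : Fin n → ℝ} {p : ℝ}
    (ht0 : 0 ≤ kthLargest x 1) (hp1 : p ≤ 1) :
    ((Measure.pi fun _ : Fin k => unif).prod unif)
        {w | p < Ystar x w.1 w.2 ∧ kthLargest x 1 < p}
      ≤ (Iic p).indicator (fun t => ENNReal.ofReal ((1 - p) * ∑ i ∈ Finset.range k, t ^ i))
          (kthLargest x 1) := by
  by_cases htp : kthLargest x 1 < p
  · simp only [htp, and_true, Ystar_eq_pickedY, indicator_of_mem (mem_Iic.mpr htp.le)]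
    exact prod_lt_pickedY_le ht0 htp hp1
  · simp [htp]

lemma integral_pow_mul_geom_sum {n : ℕ} (hn : 0 < n) (k : ℕ) (p : ℝ) :
    ∫ u in (0 : ℝ)..p, n * u ^ (n - 1) * ∑ i ∈ Finset.range k, u ^ i
      = ∑ i ∈ Finset.range k, n / (n + i) * p ^ (n + i) := by
  have : ∀ u : ℝ, n * u ^ (n - 1) * ∑ i ∈ Finset.range k, u ^ i
      = ∑ i ∈ Finset.range k, n * u ^ (n - 1 + i) := fun u => by
    simp_rw [Finset.mul_sum, pow_add, mul_assoc]
  simp_rw [this]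
  rw [intervalIntegral.integral_finsetSum fun i _ =>
    Continuous.intervalIntegrable (by fun_prop) _ _]
  refine Finset.sum_congr rfl fun i _ => ?_
  have hni : n - 1 + i + 1 = n + i := by omega
  rw [intervalIntegral.integral_const_mul, integral_pow, hni, zero_pow (by omega), sub_zero]
  rw [show ((n - 1 + i : ℕ) : ℝ) + 1 = n + i by exact_mod_cast hni]
  ring

lemma lintegral_density_mul_indicator {n : ℕ} (hn : 0 < n) (k : ℕ) {p : ℝ} (hp0 : 0 ≤ p)
    (hp1 : p ≤ 1) :
    ∫⁻ u, ENNReal.ofReal (n * u ^ (n - 1)) *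
        (Iic p).indicator (fun t => ENNReal.ofReal ((1 - p) * ∑ i ∈ Finset.range k, t ^ i)) u ∂unif
      = ENNReal.ofReal ((1 - p) * ∑ i ∈ Finset.range k, n / (n + i) * p ^ (n + i)) := by
  have hae : (fun u => ENNReal.ofReal (n * u ^ (n - 1)) *
      (Iic p).indicator (fun t => ENNReal.ofReal ((1 - p) * ∑ i ∈ Finset.range k, t ^ i)) u)
      =ᵐ[unif] (Iic p).indicator fun u =>
        ENNReal.ofReal ((1 - p) * (n * u ^ (n - 1) * ∑ i ∈ Finset.range k, u ^ i)) :=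
    ae_unif_mem_Icc.mono fun u hu => by
      by_cases hup : u ∈ Iic p
      · simp only [indicator_of_mem hup]
        rw [← ENNReal.ofReal_mul (by have := hu.1; positivity)]
        ring_nf
      · simp [indicator_of_notMem hup]
  rw [lintegral_congr_ae hae, lintegral_indicator measurableSet_Iic,
    setLIntegral_unif_Iic_ofReal hp0 hp1 (Continuous.intervalIntegrable (by fun_prop) _ _)
      fun u hu => by have := hu.1.le; have := sub_nonneg.mpr hp1; positivity,
    intervalIntegral.integral_const_mul, integral_pow_mul_geom_sum hn]

lemma P₈_lt_Ystar_kthLargest_lt_le {n m : ℕ} (hn : 0 < n) {p : ℝ} (hp0 : 0 ≤ p) (hp1 : p ≤ 1) :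
    P₈ n m {ω | p < Ystar ω.1 ω.2.1 ω.2.2 ∧ kthLargest ω.1 1 < p}
      ≤ ENNReal.ofReal ((1 - p) * ∑ i ∈ Finset.range (m - 1), n / (n + i) * p ^ (n + i)) := by
  set E := {ω : (Fin n → ℝ) × (Fin (m - 1) → ℝ) × ℝ |
    p < Ystar ω.1 ω.2.1 ω.2.2 ∧ kthLargest ω.1 1 < p}
  set H := (Iic p).indicator fun t => ENNReal.ofReal ((1 - p) * ∑ i ∈ Finset.range (m - 1), t ^ i)
  have hmax := measurable_kthLargest_one hn
  have hHm : Measurable H := Measurable.indicator (by fun_prop) measurableSet_Iic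
  have hE : MeasurableSet E := (measurableSet_lt measurable_const (measurable_Ystar hn)).inter
    (measurableSet_lt (hmax.comp measurable_fst) measurable_const)
  have hslice : ∀ᵐ x ∂(Measure.pi fun _ : Fin n => unif),
      ((Measure.pi fun _ : Fin (m - 1) => unif).prod unif) (Prod.mk x ⁻¹' E)
        ≤ H (kthLargest x 1) := by
    filter_upwards [(Measure.tendsto_eval_ae_ae (i := ⟨0, hn⟩)).eventually ae_unif_mem_Icc]
      with x hx
    exact prod_lt_Ystar_and_kthLargest_lt_le (hx.1.trans (le_kthLargest_one x _)) hp1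
  rw [P₈, Measure.prod_apply hE]
  calc _ ≤ ∫⁻ x, H (kthLargest x 1) ∂(Measure.pi fun _ : Fin n => unif) :=
        lintegral_mono_ae hslice
    _ = ∫⁻ t, H t ∂unif.withDensity fun u => ENNReal.ofReal (n * u ^ (n - 1)) := by
        rw [← map_kthLargest_one_pi_unif hn, lintegral_map hHm hmax]
    _ = _ := by
        rw [lintegral_withDensity_eq_lintegral_mul _ (by fun_prop) hHm]
        exact lintegral_density_mul_indicator hn _ hp0 hp1

lemma sum_inv_add_succ_le_log {x : ℝ} (hx : 0 < x) (k : ℕ) :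
    ∑ i ∈ Finset.range k, 1 / (x + i + 1) ≤ Real.log (x + k) - Real.log x := by
  induction k with
  | zero => simp
  | succ k ih =>
    have hxk : 0 < x + k := by positivity
    have hstep : 1 / (x + k + 1) ≤ Real.log (x + k + 1) - Real.log (x + k) := by
      have := Real.one_sub_inv_le_log_of_pos (x := (x + k + 1) / (x + k)) (by positivity)
      rw [Real.log_div (by positivity) hxk.ne'] at this
      calc 1 / (x + k + 1) = 1 - ((x + k + 1) / (x + k))⁻¹ := by field_simp; ring
        _ ≤ _ := this
    rw [Finset.sum_range_succ, Nat.cast_succ, ← add_assoc]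
    linarith

lemma sum_div_add_le {x : ℝ} (hx : 1 ≤ x) (k : ℕ) :
    ∑ i ∈ Finset.range k, x / (x + i) ≤ x * (1 + Real.log (1 + k / x)) := by
  have hx0 : 0 < x := by linarith
  have hsum : ∑ i ∈ Finset.range k, 1 / (x + i) ≤ 1 / x + (Real.log (x + k) - Real.log x) :=
    calc ∑ i ∈ Finset.range k, 1 / (x + i) ≤ ∑ i ∈ Finset.range (k + 1), 1 / (x + i) :=
          Finset.sum_le_sum_of_subset_of_nonneg (Finset.range_subset_range.mpr k.le_succ)
            fun i _ _ => by positivity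
      _ = 1 / x + ∑ i ∈ Finset.range k, 1 / (x + i + 1) := by
          rw [Finset.sum_range_succ', add_comm]; push_cast; simp [add_assoc]
      _ ≤ _ := by gcongr; exact sum_inv_add_succ_le_log hx0 k
  have hlog : Real.log (x + k) - Real.log x = Real.log (1 + k / x) := by
    rw [← Real.log_div (by positivity) hx0.ne']; congr 1; field_simp
  calc ∑ i ∈ Finset.range k, x / (x + i) = x * ∑ i ∈ Finset.range k, 1 / (x + i) := by
        rw [Finset.mul_sum]; exact Finset.sum_congr rfl fun i _ => by ring
    _ ≤ x * (1 / x + Real.log (1 + k / x)) := by rw [← hlog]; gcongr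
    _ = 1 + x * Real.log (1 + k / x) := by field_simp
    _ ≤ _ := by nlinarith

lemma one_sub_mul_sum_le_one_sub_rpow_sum {p : ℝ} (hp0 : 0 < p) (hp1 : p ≤ 1) {a : ℕ → ℝ}
    (ha0 : ∀ i, 0 ≤ a i) (ha1 : ∀ i, a i ≤ 1) (k : ℕ) :
    (1 - p) * ∑ i ∈ Finset.range k, a i * p ^ i ≤ 1 - p ^ (∑ i ∈ Finset.range k, a i) := by
  induction k with
  | zero => simp
  | succ k ih =>
    set A := ∑ i ∈ Finset.range k, a i
    have hbernoulli : p ^ a k ≤ 1 - a k * (1 - p) := by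
      have := rpow_one_add_le_one_add_mul_self (s := p - 1) (by linarith) (ha0 k) (ha1 k)
      rw [add_sub_cancel] at this
      linarith
    have hpow : p ^ k ≤ p ^ A := by
      rw [← Real.rpow_natCast]
      refine Real.rpow_le_rpow_of_exponent_ge hp0 hp1 ?_
      simpa using Finset.sum_le_sum fun i (_ : i ∈ Finset.range k) => ha1 i
    rw [Finset.sum_range_succ, Finset.sum_range_succ, Real.rpow_add hp0, mul_add]
    linarith [mul_le_mul_of_nonneg_left hpow (mul_nonneg (ha0 k) (sub_nonneg.mpr hp1)),
      mul_le_mul_of_nonneg_left hbernoulli (Real.rpow_nonneg hp0.le A)]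

theorem stmt8_general (n m : ℕ) (c : ℝ) (hn : 1 ≤ n)
    (hc : (n : ℝ) * (1 + Real.log (1 + (m : ℝ) / (n : ℝ))) ≤ c) :
    ∀ p ∈ Set.Ioo (0 : ℝ) 1,
      (P₈ n m {ω : (Fin n → ℝ) × (Fin (m - 1) → ℝ) × ℝ |
          p < Ystar ω.1 ω.2.1 ω.2.2 ∧ kthLargest ω.1 1 < p}).toReal ≤
      (1 - p ^ c) * p ^ n := by
  rintro p ⟨hp0, hp1⟩
  have hsum : ∑ i ∈ Finset.range (m - 1), (n : ℝ) / (n + i) ≤ c := by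
    refine (sum_div_add_le (by exact_mod_cast hn) _).trans (hc.trans' ?_)
    gcongr
    exact_mod_cast m.sub_le 1
  have hc0 : 0 ≤ c := (Finset.sum_nonneg fun i _ => by positivity).trans hsum
  have hpc : p ^ c ≤ 1 := Real.rpow_le_one hp0.le hp1.le hc0
  refine ENNReal.toReal_le_of_le_ofReal (by nlinarith [pow_pos hp0 n])
    ((P₈_lt_Ystar_kthLargest_lt_le hn hp0.le hp1.le).trans (ENNReal.ofReal_le_ofReal ?_))
  calc (1 - p) * ∑ i ∈ Finset.range (m - 1), (n : ℝ) / (n + i) * p ^ (n + i)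
      = ((1 - p) * ∑ i ∈ Finset.range (m - 1), (n : ℝ) / (n + i) * p ^ i) * p ^ n := by
        simp_rw [Finset.mul_sum, Finset.sum_mul, pow_add]
        ring_nf
    _ ≤ (1 - p ^ ∑ i ∈ Finset.range (m - 1), (n : ℝ) / (n + i)) * p ^ n := by
        gcongr
        exact one_sub_mul_sum_le_one_sub_rpow_sum hp0 hp1.le (fun i => by positivity)
          (fun i => div_le_one_of_le₀ (by simp) (by positivity)) _
    _ ≤ (1 - p ^ c) * p ^ n := by
        gcongr (1 - ?_) * _
        exact Real.rpow_le_rpow_of_exponent_ge hp0 hp1.le hsum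

/-- For integers `n ≥ 1`, `m ≥ 2` and a real `c ≥ n(1 + ln(1 + m/n))`,
for all `p ∈ (0,1)`: `(1 - p^c)·p^n ≥ Pr[Y*_{n,m-1} > p ∧ X_{(1),n} < p]`, i.e. the
conditional probability that the maximum of `c` i.i.d. uniforms exceeds `p` given
`X_{(1),n} < p` is at least `Pr[Y*_{n,m-1} > p | X_{(1),n} < p]`. -/
theorem stmt8 (n m : ℕ) (c : ℝ) (hn : 1 ≤ n) (hm : 2 ≤ m)
    (hc : (n : ℝ) * (1 + Real.log (1 + (m : ℝ) / (n : ℝ))) ≤ c) :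
    ∀ p ∈ Set.Ioo (0 : ℝ) 1,
      (P₈ n m {ω : (Fin n → ℝ) × (Fin (m - 1) → ℝ) × ℝ |
          p < Ystar ω.1 ω.2.1 ω.2.2 ∧ kthLargest ω.1 1 < p}).toReal ≤
      (1 - p ^ c) * p ^ n :=
  stmt8_general n m c hn hc
end

section
/- Let m ≥ 2 and n ≥ 4m be integers, and let (v_{ij})_{i∈[n], j∈[m]} be i.i.d. random variables with the equal-revenue distribution ER. Then Σ_{j=1}^{m} E[ max_{i∈[n]} ( v_{ij} · 1{ there exists k ≠ j with v_{ik} > v_{ij} } ) ] ≥ m·√(mn)/14. -/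
/-!
Fix an item `j` and a threshold `T ≥ 1`, and put `r = 1/(2T)`. A bidder whose `j`-th value lies in
`(T, 2T]` while another of their values exceeds `2T` forces the `j`-th term of the sum above `T`;
this happens with probability `q = r (1 - (1 - r)^(m-1))`, independently across the `n` bidders.
Taking `T = max(√(mn)/12, 1)` gives `n q ≥ 2`, so some bidder does it with probability at least
`1 - e⁻² ≥ 6/7`, and Markov's inequality bounds each expectation below by `6T/7 ≥ √(mn)/14`.

The expectations are finite although ER has infinite mean: the integrand is at most
`∑ i, ∑ k ≠ j, √(v i j) √(v i k)`, a sum of products of independent square roots of ER variables.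
-/

open MeasureTheory Set

section ProductMeasure

variable {ι α : Type*} [Fintype ι] [MeasurableSpace α] (μ : Measure α) [IsProbabilityMeasure μ]

lemma measureReal_pi_exists_mem {C : Set α} (hC : MeasurableSet C) :
    (Measure.pi fun _ : ι => μ).real {w | ∃ i, w i ∈ C} =
      1 - (1 - μ.real C) ^ Fintype.card ι := by
  have hcompl : {w : ι → α | ∃ i, w i ∈ C}ᶜ = univ.pi fun _ => Cᶜ := by
    ext w; simp
  have hmeas : MeasurableSet {w : ι → α | ∃ i, w i ∈ C} := by
    rw [ofPred_exists]; exact .iUnion fun i => measurable_pi_apply i hC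
  rw [← compl_compl {w : ι → α | ∃ i, w i ∈ C}, probReal_compl_eq_one_sub hmeas.compl, hcompl,
    measureReal_def, Measure.pi_pi, ENNReal.toReal_prod, Finset.prod_const, Finset.card_univ]
  simp_rw [← measureReal_def, probReal_compl_eq_one_sub hC]

lemma measureReal_pi_mem_and_exists_ne_mem [DecidableEq ι] {A B : Set α} (hA : MeasurableSet A)
    (hB : MeasurableSet B) (j : ι) :
    (Measure.pi fun _ : ι => μ).real {w | w j ∈ A ∧ ∃ k ≠ j, w k ∈ B} =
      μ.real A * (1 - (1 - μ.real B) ^ (Fintype.card ι - 1)) := by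
  have hdiff : {w : ι → α | w j ∈ A ∧ ∃ k ≠ j, w k ∈ B} =
      (fun w => w j) ⁻¹' A \ univ.pi (Function.update (fun _ => Bᶜ) j A) := by
    ext w
    simp only [mem_ofPred_eq, mem_sdiff, mem_preimage, mem_univ_pi]
    constructor
    · rintro ⟨hj, k, hkj, hk⟩
      exact ⟨hj, fun h => by simpa [Function.update_of_ne hkj, hk] using h k⟩
    · rintro ⟨hj, h⟩
      push Not at h
      obtain ⟨k, hk⟩ := h
      rcases eq_or_ne k j with rfl | hkj
      · simp [hj] at hk
      · exact ⟨hj, k, hkj, by simpa [Function.update_of_ne hkj] using hk⟩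
  have hsub : univ.pi (Function.update (fun _ => Bᶜ) j A) ⊆ (fun w : ι → α => w j) ⁻¹' A :=
    fun w hw => by simpa using hw j (mem_univ j)
  have hbox : (Measure.pi fun _ : ι => μ).real (univ.pi (Function.update (fun _ => Bᶜ) j A)) =
      μ.real A * (1 - μ.real B) ^ (Fintype.card ι - 1) := by
    rw [measureReal_def, Measure.pi_pi, ENNReal.toReal_prod, Fintype.prod_eq_mul_prod_compl j,
      Finset.prod_congr rfl fun k hk => by rw [Function.update_of_ne (by simpa using hk)],
      Finset.prod_const, Finset.card_compl, Finset.card_singleton, Function.update_self]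
    simp_rw [← measureReal_def, probReal_compl_eq_one_sub hB]
  have hboxMeas : MeasurableSet (univ.pi (Function.update (fun _ => Bᶜ) j A)) :=
    .univ_pi fun k => by rcases eq_or_ne k j with rfl | hkj <;> simp [*, hB.compl]
  rw [hdiff, measureReal_sdiff hsub hboxMeas, hbox,
    (measurePreserving_eval (fun _ => μ) j).measureReal_preimage hA.nullMeasurableSet]
  ring

lemma ae_forall_pi [Countable ι] {p : α → Prop} (h : ∀ᵐ x ∂μ, p x) :
    ∀ᵐ w ∂(Measure.pi fun _ : ι => μ), ∀ i, p (w i) :=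
  ae_all_iff.2 fun _ => Measure.tendsto_eval_ae_ae.eventually h

end ProductMeasure

def IsEqualRevenue (μ : Measure ℝ) : Prop :=
  ∀ t : ℝ, 1 ≤ t → μ (Ioi t) = ENNReal.ofReal (1 / t)

namespace IsEqualRevenue

variable {μ : Measure ℝ}

lemma measureReal_Ioi (hμ : IsEqualRevenue μ) {t : ℝ} (ht : 1 ≤ t) : μ.real (Ioi t) = 1 / t := by
  rw [measureReal_def, hμ t ht, ENNReal.toReal_ofReal (by positivity)]

lemma measureReal_Ioc [IsFiniteMeasure μ] (hμ : IsEqualRevenue μ) {a b : ℝ} (ha : 1 ≤ a)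
    (hab : a ≤ b) :
    μ.real (Ioc a b) = 1 / a - 1 / b := by
  rw [← Ioi_sdiff_Ioi, measureReal_sdiff (Ioi_subset_Ioi hab) measurableSet_Ioi,
    hμ.measureReal_Ioi ha, hμ.measureReal_Ioi (ha.trans hab)]

lemma ae_one_lt [IsProbabilityMeasure μ] (hμ : IsEqualRevenue μ) : ∀ᵐ x ∂μ, 1 < x := by
  change μ (Ioi 1)ᶜ = 0
  rw [prob_compl_eq_one_sub measurableSet_Ioi, hμ 1 le_rfl]
  simp

lemma integrable_sqrt [IsProbabilityMeasure μ] (hμ : IsEqualRevenue μ) :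
    Integrable Real.sqrt μ := by
  refine ⟨Real.continuous_sqrt.measurable.aestronglyMeasurable, ?_⟩
  have hnonneg : 0 ≤ᵐ[μ] Real.sqrt := .of_forall Real.sqrt_nonneg
  rw [hasFiniteIntegral_iff_ofReal hnonneg, lintegral_eq_lintegral_meas_lt μ hnonneg
    Real.continuous_sqrt.measurable.aemeasurable, ← Ioc_union_Ioi_eq_Ioi zero_le_one,
    lintegral_union measurableSet_Ioi (Ioc_disjoint_Ioi le_rfl)]
  have htail : ∫⁻ t in Ioi (1:ℝ), μ {x | t < √x} ≤
      ∫⁻ t in Ioi (1:ℝ), ENNReal.ofReal (t ^ (-2:ℝ)) := by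
    refine setLIntegral_mono (by fun_prop) fun t (ht : 1 < t) => ?_
    calc μ {x | t < √x} ≤ μ (Ioi (t ^ 2)) :=
          measure_mono fun x hx => (Real.lt_sqrt (by linarith)).mp hx
      _ = ENNReal.ofReal (t ^ (-2:ℝ)) := by
          rw [hμ _ (by nlinarith), Real.rpow_neg (by linarith), Real.rpow_two, one_div]
  have hfin : ∫⁻ t in Ioi (1:ℝ), ENNReal.ofReal (t ^ (-2:ℝ)) < ⊤ :=
    (integrableOn_Ioi_rpow_of_lt (by norm_num) one_pos).lintegral_lt_top
  refine ENNReal.add_lt_top.2 ⟨?_, htail.trans_lt hfin⟩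
  calc ∫⁻ t in Ioc (0:ℝ) 1, μ {x | t < √x} ≤ ∫⁻ _ in Ioc (0:ℝ) 1, 1 :=
        lintegral_mono fun _ => prob_le_one
    _ < ⊤ := by simp

end IsEqualRevenue

lemma one_sub_pow_le_exp_neg_mul {x : ℝ} (hx : x ≤ 1) (N : ℕ) :
    (1 - x) ^ N ≤ Real.exp (-(N * x)) := by
  rw [neg_mul_eq_mul_neg, Real.exp_nat_mul]
  exact pow_le_pow_left₀ (by linarith) (Real.one_sub_le_exp_neg x) N

lemma one_sub_pow_le_inv_seven {q : ℝ} {N : ℕ} (hq : q ≤ 1) (hNq : 2 ≤ N * q) :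
    (1 - q) ^ N ≤ 7⁻¹ := by
  have he : 7 < Real.exp 2 := by
    rw [show (2 : ℝ) = 1 + 1 by norm_num, Real.exp_add]
    nlinarith [Real.exp_one_gt_d9]
  calc (1 - q) ^ N ≤ Real.exp (-(N * q)) := one_sub_pow_le_exp_neg_mul hq N
    _ ≤ Real.exp (-2) := Real.exp_le_exp.2 (by linarith)
    _ ≤ 7⁻¹ := by rw [Real.exp_neg]; exact inv_anti₀ (by norm_num) he.le

/-- The probability that one coordinate lands in an event of probability `r` while one of `N`
further independent coordinates lands in another event of probability `r`. -/
def dominationProb (r : ℝ) (N : ℕ) : ℝ := r * (1 - (1 - r) ^ N)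

section DominationProb

variable {r : ℝ} {N : ℕ}

lemma dominationProb_le (hr0 : 0 ≤ r) (hr1 : r ≤ 1) : dominationProb r N ≤ r :=
  mul_le_of_le_one_right hr0 (by linarith [pow_nonneg (sub_nonneg.2 hr1) N])

lemma sq_le_dominationProb (hr0 : 0 ≤ r) (hr1 : r ≤ 1) (hN : 1 ≤ N) :
    r ^ 2 ≤ dominationProb r N := by
  have : (1 - r) ^ N ≤ 1 - r := pow_le_of_le_one (by linarith) (by linarith) (by omega)
  unfold dominationProb; nlinarith

lemma div_le_dominationProb (hr0 : 0 ≤ r) (hr1 : r ≤ 1) :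
    N * r ^ 2 / (1 + N * r) ≤ dominationProb r N := by
  have hpos : 0 < 1 + N * r := by positivity
  have hexp : (1 + N * r) * Real.exp (-(N * r)) ≤ 1 := by
    rw [Real.exp_neg, ← div_eq_mul_inv, div_le_one (Real.exp_pos _)]
    linarith [Real.add_one_le_exp (N * r)]
  have := one_sub_pow_le_exp_neg_mul hr1 N
  unfold dominationProb
  rw [div_le_iff₀ hpos]
  nlinarith [mul_le_mul_of_nonneg_left this hpos.le]

end DominationProb

lemma exists_threshold_sqrt_div_fourteen_le {m n : ℕ} (hm : 2 ≤ m) (hn : 4 * m ≤ n) :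
    ∃ T : ℝ, 1 ≤ T ∧
      √(m * n) / 14 ≤ T * (1 - (1 - dominationProb (2 * T)⁻¹ (m - 1)) ^ n) := by
  set S := √((m : ℝ) * n)
  have hm' : (2 : ℝ) ≤ m := by exact_mod_cast hm
  have hn' : 4 * (m : ℝ) ≤ n := by exact_mod_cast hn
  have hS2 : S ^ 2 = m * n := Real.sq_sqrt (by positivity)
  have hS : 2 * m ≤ S := Real.le_sqrt_of_sq_le (by nlinarith)
  rcases le_or_gt S 12 with hS12 | hS12
  · refine ⟨1, le_rfl, ?_⟩
    have hq := sq_le_dominationProb (r := (2 * 1)⁻¹) (N := m - 1) (by norm_num) (by norm_num)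
      (by omega)
    have hq1 := dominationProb_le (r := (2 * 1 : ℝ)⁻¹) (N := m - 1) (by norm_num) (by norm_num)
    have hmiss := one_sub_pow_le_inv_seven (N := n) (by linarith) (by nlinarith)
    linarith
  · refine ⟨S / 12, by linarith, ?_⟩
    -- with `x = 6 / √(mn)` we have `n x² = 36 / m` and, since `√(mn) ≥ 2m`, `x ≤ 3 / m`
    set x := (2 * (S / 12))⁻¹
    have hxS : x * S = 6 := by simp only [x]; field_simp; norm_num
    have hx0 : 0 ≤ x := by positivity
    have hx1 : x ≤ 1 := by nlinarith
    have hxm : x * m ≤ 3 := by nlinarith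
    have hnx : m * (n * x ^ 2) = 36 := by nlinarith
    have hN : ((m - 1 : ℕ) : ℝ) = m - 1 := by push_cast [Nat.cast_sub (by omega : 1 ≤ m)]; ring
    have hq := div_le_dominationProb (N := m - 1) hx0 hx1
    rw [hN] at hq
    have hnq : 2 ≤ n * ((m - 1) * x ^ 2 / (1 + (m - 1) * x)) := by
      rw [← mul_div_assoc, le_div_iff₀ (by nlinarith)]
      refine le_of_mul_le_mul_left ?_ (by positivity : (0 : ℝ) < m)
      nlinarith
    have hmiss := one_sub_pow_le_inv_seven (q := dominationProb x (m - 1)) (N := n)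
      ((dominationProb_le hx0 hx1).trans hx1) (hnq.trans (by gcongr))
    nlinarith [mul_le_mul_of_nonneg_left hmiss (by positivity : 0 ≤ S / 12)]

section Integrand

variable {ι κ : Type*} [Fintype ι] [Fintype κ]

noncomputable def valueIfDominated [DecidableEq ι] (j : ι) (w : ι → ℝ) : ℝ :=
  if ∃ k, k ≠ j ∧ w j < w k then w j else 0

lemma measurable_valueIfDominated [DecidableEq ι] (j : ι) : Measurable (valueIfDominated j) := by
  refine Measurable.ite ?_ (measurable_pi_apply j) measurable_const
  simp only [ofPred_exists]
  exact .iUnion fun k => (MeasurableSet.const _).inter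
    (measurableSet_lt (measurable_pi_apply j) (measurable_pi_apply k))

lemma valueIfDominated_nonneg [DecidableEq ι] {j : ι} {w : ι → ℝ} (hw : 0 ≤ w j) :
    0 ≤ valueIfDominated j w := by
  unfold valueIfDominated; split_ifs <;> simp [hw]

lemma valueIfDominated_le_sum_sqrt_mul_sqrt [DecidableEq ι] (j : ι) (w : ι → ℝ) :
    valueIfDominated j w ≤ ∑ k ∈ Finset.univ.erase j, √(w j) * √(w k) := by
  have hsum : 0 ≤ ∑ k ∈ Finset.univ.erase j, √(w j) * √(w k) := by positivity
  unfold valueIfDominated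
  split_ifs with h
  · obtain ⟨k, hkj, hlt⟩ := h
    rcases le_or_gt (w j) 0 with hj | hj
    · linarith
    calc w j = √(w j) * √(w j) := (Real.mul_self_sqrt hj.le).symm
      _ ≤ √(w j) * √(w k) := by gcongr
      _ ≤ _ := Finset.single_le_sum (f := fun k => √(w j) * √(w k)) (fun _ _ => by positivity)
          (Finset.mem_erase.2 ⟨hkj, Finset.mem_univ k⟩)
  · exact hsum

variable {μ : Measure ℝ} [IsProbabilityMeasure μ]

lemma integrable_sqrt_mul_sqrt (hμ : IsEqualRevenue μ) {j k : ι} (hjk : j ≠ k) :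
    Integrable (fun w : ι → ℝ => √(w j) * √(w k)) (Measure.pi fun _ => μ) := by
  have hsqrt (i : ι) : Integrable (fun w : ι → ℝ => √(w i)) (Measure.pi fun _ => μ) :=
    (measurePreserving_eval _ i).integrable_comp_of_integrable hμ.integrable_sqrt
  have hindep := (ProbabilityTheory.iIndepFun_pi (μ := fun _ : ι => μ) (X := fun _ => Real.sqrt)
    fun _ => Real.continuous_sqrt.measurable.aemeasurable).indepFun hjk
  exact hindep.integrable_mul (hsqrt j) (hsqrt k)

lemma ae_nonneg_iSup_valueIfDominated [DecidableEq ι] (hμ : IsEqualRevenue μ) (j : ι) :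
    0 ≤ᵐ[Measure.pi fun _ => Measure.pi fun _ => μ]
      fun v : κ → ι → ℝ => ⨆ i, valueIfDominated j (v i) := by
  filter_upwards [ae_forall_pi _ (ae_forall_pi _ hμ.ae_one_lt)] with v hv
  exact Real.iSup_nonneg fun i => valueIfDominated_nonneg (zero_lt_one.trans (hv i j)).le

lemma integrable_iSup_valueIfDominated [DecidableEq ι] (hμ : IsEqualRevenue μ) (j : ι) :
    Integrable (fun v : κ → ι → ℝ => ⨆ i, valueIfDominated j (v i))
      (Measure.pi fun _ => Measure.pi fun _ => μ) := by
  refine Integrable.mono' (g := fun v => ∑ i, ∑ k ∈ Finset.univ.erase j, √(v i j) * √(v i k))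
    ?_ ?_ ?_
  · refine integrable_finsetSum _ fun i _ => integrable_finsetSum _ fun k hk => ?_
    exact (measurePreserving_eval (fun _ : κ => Measure.pi fun _ : ι => μ) i)
      |>.integrable_comp_of_integrable
        (integrable_sqrt_mul_sqrt hμ (Finset.ne_of_mem_erase hk).symm)
  · exact (Measurable.iSup fun i =>
      (measurable_valueIfDominated j).comp (measurable_pi_apply i)).aestronglyMeasurable
  · filter_upwards [ae_nonneg_iSup_valueIfDominated hμ j] with v hv
    rw [Real.norm_of_nonneg hv]
    refine Real.iSup_le (fun i => ?_) (by positivity)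
    exact (valueIfDominated_le_sum_sqrt_mul_sqrt j (v i)).trans
      (Finset.single_le_sum (f := fun i => ∑ k ∈ Finset.univ.erase j, √(v i j) * √(v i k))
        (fun _ _ => by positivity) (Finset.mem_univ i))

lemma mul_one_sub_pow_le_integral_iSup_valueIfDominated [DecidableEq ι] (hμ : IsEqualRevenue μ)
    {T : ℝ} (hT : 1 ≤ T) (j : ι) :
    T * (1 - (1 - dominationProb (2 * T)⁻¹ (Fintype.card ι - 1)) ^ Fintype.card κ) ≤
      ∫ v : κ → ι → ℝ, ⨆ i, valueIfDominated j (v i)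
        ∂Measure.pi fun _ => Measure.pi fun _ => μ := by
  set C := {w : ι → ℝ | w j ∈ Ioc T (2 * T) ∧ ∃ k ≠ j, w k ∈ Ioi (2 * T)}
  have hCmeas : MeasurableSet C := by measurability
  have hC : (Measure.pi fun _ : ι => μ).real C =
      dominationProb (2 * T)⁻¹ (Fintype.card ι - 1) := by
    rw [measureReal_pi_mem_and_exists_ne_mem μ measurableSet_Ioc measurableSet_Ioi,
      hμ.measureReal_Ioc hT (by linarith), hμ.measureReal_Ioi (by linarith), dominationProb]
    field_simp
    ring
  have hsub : {v : κ → ι → ℝ | ∃ i, v i ∈ C} ⊆ {v | T ≤ ⨆ i, valueIfDominated j (v i)} := by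
    rintro v ⟨i, hj, k, hkj, hk⟩
    have hdom : ∃ k, k ≠ j ∧ v i j < v i k := ⟨k, hkj, hj.2.trans_lt hk⟩
    calc T ≤ valueIfDominated j (v i) := by rw [valueIfDominated, if_pos hdom]; exact hj.1.le
      _ ≤ ⨆ i, valueIfDominated j (v i) :=
        le_ciSup (f := fun i => valueIfDominated j (v i)) (finite_range _).bddAbove i
  calc _ = T * (Measure.pi fun _ => Measure.pi fun _ => μ).real {v : κ → ι → ℝ | ∃ i, v i ∈ C} := by
        rw [measureReal_pi_exists_mem _ hCmeas, hC]
    _ ≤ T * (Measure.pi fun _ => Measure.pi fun _ => μ).real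
          {v : κ → ι → ℝ | T ≤ ⨆ i, valueIfDominated j (v i)} :=
        mul_le_mul_of_nonneg_left (measureReal_mono hsub) (by linarith)
    _ ≤ _ := mul_meas_ge_le_integral_of_nonneg
      (ae_nonneg_iSup_valueIfDominated hμ j) (integrable_iSup_valueIfDominated hμ j) T

end Integrand

open Classical in
/-- Let `μ` be the equal-revenue distribution, i.e. the probability measure
on `ℝ` with `Pr[V > t] = 1/t` for all `t ≥ 1`.  For integers `m ≥ 2` and `n ≥ 4m`, and
`(v_{ij})_{i ∈ [n], j ∈ [m]}` i.i.d. with distribution `μ`: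
`Σ_{j=1}^m E[max_{i ∈ [n]} (v_{ij} · 1{∃ k ≠ j, v_{ik} > v_{ij}})] ≥ m·√(mn)/14`. -/
theorem stmt19 (μ : Measure ℝ) [IsProbabilityMeasure μ]
    (hER : ∀ t : ℝ, 1 ≤ t → μ (Set.Ioi t) = ENNReal.ofReal (1 / t))
    (n m : ℕ) (hm : 2 ≤ m) (hn : 4 * m ≤ n) :
    (m : ℝ) * Real.sqrt ((m : ℝ) * (n : ℝ)) / 14 ≤
      ∑ j : Fin m, ∫ v : Fin n → Fin m → ℝ,
        (⨆ i : Fin n, if ∃ k, k ≠ j ∧ v i j < v i k then v i j else 0)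
          ∂(Measure.pi fun _ : Fin n => Measure.pi fun _ : Fin m => μ) := by
  obtain ⟨T, hT, hbound⟩ := exists_threshold_sqrt_div_fourteen_le hm hn
  calc (m : ℝ) * √(m * n) / 14 = ∑ _j : Fin m, √(m * n) / 14 := by
        rw [Finset.sum_const, Finset.card_univ, Fintype.card_fin, nsmul_eq_mul]; ring
    _ ≤ _ := Finset.sum_le_sum fun j _ => by
      have h := mul_one_sub_pow_le_integral_iSup_valueIfDominated (κ := Fin n) hER hT j
      rw [Fintype.card_fin, Fintype.card_fin] at h
      -- the two `if`s differ only in their `Decidable` instances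
      convert hbound.trans h using 4 with v
      ext i; unfold valueIfDominated; congr!
end
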